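/- arXiv:2006.05640 — 7 statements merged into one kernel-verified Lean document; each statement's English description precedes it below -/
import Mathlib

section
/- Let f be a continuous, strictly positive, strictly log-concave density on [0,1] with cdf F, and suppose S ∈ (0, 1 - E[θ]). Then there exists a unique θ₀ ∈ (0,1] satisfying θ₀ - S = E[θ | θ ≤ θ₀] whenever a solution with θ₀ > 0 exists; i.e., the function g(t) = E[θ | θ ≤ t] + S - t has at most one zero in (0,1). -/
open Set intervalIntegral

/-- Conditional expectation E[θ | θ ≤ t] for a density `f` on [0,1]. -/
noncomputable def condMean (f : ℝ → ℝ) (t : ℝ) : ℝ :=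
  (∫ x in (0:ℝ)..t, x * f x) / (∫ x in (0:ℝ)..t, f x)

/-- Key inequality: for a positive continuous function `g` with `log ∘ g`
concave on `[0,1]`, the ratio `g/F` is strictly decreasing, in product form. -/
lemma key_ineq (g : ℝ → ℝ) (hc : Continuous g) (hpos : ∀ x, 0 < g x)
    (hconc : ConcaveOn ℝ (Set.Icc 0 1) (fun x => Real.log (g x)))
    {a b : ℝ} (ha : 0 < a) (hab : a < b) (hb : b ≤ 1) :
    (∫ x in (0:ℝ)..a, g x) * g b < g a * (∫ x in (0:ℝ)..b, g x) := by
  have ha1 : a ≤ 1 := hab.le.trans hb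
  -- pointwise inequality on [0,a]
  have hpt : ∀ x ∈ Icc (0:ℝ) a, g x * g b ≤ g a * g (x + (b - a)) := by
    intro x hx
    have hxb : x < b := lt_of_le_of_lt hx.2 hab
    have hbx : (0:ℝ) < b - x := by linarith
    set μ : ℝ := (b - a) / (b - x) with hμ
    set ν : ℝ := (a - x) / (b - x) with hν
    have hμ0 : 0 ≤ μ := div_nonneg (by linarith) hbx.le
    have hν0 : 0 ≤ ν := div_nonneg (by linarith [hx.2]) hbx.le
    have hsum : μ + ν = 1 := by
      rw [hμ, hν, ← add_div]
      field_simp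
      ring
    have hxmem : x ∈ Icc (0:ℝ) 1 := ⟨hx.1, le_trans hx.2 ha1⟩
    have hbmem : b ∈ Icc (0:ℝ) 1 := ⟨by linarith, hb⟩
    have h1 := hconc.2 hxmem hbmem hμ0 hν0 hsum
    have h2 := hconc.2 hxmem hbmem hν0 hμ0 (by linarith)
    have e1 : μ • x + ν • b = a := by
      simp only [smul_eq_mul, hμ, hν]; field_simp; ring
    have e2 : ν • x + μ • b = x + (b - a) := by
      simp only [smul_eq_mul, hμ, hν]; field_simp; ring
    rw [e1] at h1; rw [e2] at h2
    have hlog : Real.log (g x) + Real.log (g b)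
        ≤ Real.log (g a) + Real.log (g (x + (b - a))) := by
      have hs : μ * Real.log (g x) + ν * Real.log (g b)
          + (ν * Real.log (g x) + μ * Real.log (g b))
          = Real.log (g x) + Real.log (g b) := by
        have : μ = 1 - ν := by linarith
        rw [this]; ring
      simp only [smul_eq_mul] at h1 h2
      linarith
    have := Real.exp_le_exp.mpr hlog
    rwa [Real.exp_add, Real.exp_add, Real.exp_log (hpos _), Real.exp_log (hpos _),
      Real.exp_log (hpos _), Real.exp_log (hpos _)] at this
  -- integrate the pointwise inequality
  have hint1 : IntervalIntegrable (fun x => g x * g b) MeasureTheory.volume 0 a :=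
    (hc.mul continuous_const).intervalIntegrable 0 a
  have hint2 : IntervalIntegrable (fun x => g a * g (x + (b - a))) MeasureTheory.volume 0 a :=
    (continuous_const.mul (hc.comp (continuous_id.add continuous_const))).intervalIntegrable 0 a
  have hmono : (∫ x in (0:ℝ)..a, g x * g b) ≤ ∫ x in (0:ℝ)..a, g a * g (x + (b - a)) :=
    integral_mono_on ha.le hint1 hint2 hpt
  have e3 : (∫ x in (0:ℝ)..a, g x * g b) = (∫ x in (0:ℝ)..a, g x) * g b := by
    rw [← intervalIntegral.integral_mul_const]
  have e4 : (∫ x in (0:ℝ)..a, g a * g (x + (b - a)))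
      = g a * ((∫ x in (0:ℝ)..b, g x) - ∫ x in (0:ℝ)..(b - a), g x) := by
    rw [intervalIntegral.integral_const_mul, intervalIntegral.integral_comp_add_right,
      zero_add, show a + (b - a) = b by ring]
    congr 1
    have hadd : (∫ x in (0:ℝ)..(b-a), g x) + (∫ x in (b-a)..b, g x) = ∫ x in (0:ℝ)..b, g x :=
      intervalIntegral.integral_add_adjacent_intervals
        (hc.intervalIntegrable _ _) (hc.intervalIntegrable _ _)
    linarith
  have hpos2 : 0 < ∫ x in (0:ℝ)..(b - a), g x :=
    intervalIntegral.intervalIntegral_pos_of_pos (hc.intervalIntegrable _ _) hpos (by linarith)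
  have := hmono
  rw [e3, e4] at this
  have : (∫ x in (0:ℝ)..a, g x) * g b ≤ g a * ((∫ x in (0:ℝ)..b, g x) - ∫ x in (0:ℝ)..(b - a), g x) := this
  nlinarith [hpos a]

lemma aux_uniq (g : ℝ → ℝ) (S : ℝ) (hc : Continuous g) (hpos : ∀ x, 0 < g x)
    (hconc : ConcaveOn ℝ (Set.Icc 0 1) (fun x => Real.log (g x)))
    {t₁ t₂ : ℝ} (ht₁ : t₁ ∈ Set.Ioo (0:ℝ) 1) (ht₂ : t₂ ∈ Set.Ioo (0:ℝ) 1) (hlt : t₁ < t₂)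
    (h1 : (∫ x in (0:ℝ)..t₁, x * g x) + (S - t₁) * (∫ x in (0:ℝ)..t₁, g x) = 0)
    (h2 : (∫ x in (0:ℝ)..t₂, x * g x) + (S - t₂) * (∫ x in (0:ℝ)..t₂, g x) = 0) :
    False := by
  set h : ℝ → ℝ := fun t => (∫ x in (0:ℝ)..t, x * g x) + (S - t) * (∫ x in (0:ℝ)..t, g x)
    with hh
  have hD : ∀ t : ℝ, HasDerivAt (fun u => ∫ x in (0:ℝ)..u, g x) (g t) t := fun t =>
    (hc.integral_hasStrictDerivAt 0 t).hasDerivAt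
  have hN : ∀ t : ℝ, HasDerivAt (fun u => ∫ x in (0:ℝ)..u, x * g x) (t * g t) t := fun t =>
    ((continuous_id.mul hc).integral_hasStrictDerivAt 0 t).hasDerivAt
  have hderiv : ∀ t : ℝ, HasDerivAt h (S * g t - ∫ x in (0:ℝ)..t, g x) t := by
    intro t
    have hst : HasDerivAt (fun u : ℝ => S - u) (-1) t := by
      simpa using (hasDerivAt_id t).const_sub S
    have := (hN t).add ((hst.mul (hD t)))
    refine this.congr_deriv ?_
    ring
  have hcont : Continuous h := by
    apply continuous_iff_continuousAt.mpr
    intro t; exact (hderiv t).continuousAt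
  have h0 : h 0 = 0 := by simp [hh]
  -- Rolle on [0, t₁]
  have ht1' : h t₁ = 0 := h1
  have ht2' : h t₂ = 0 := h2
  obtain ⟨a, haIoo, haz⟩ := exists_hasDerivAt_eq_zero ht₁.1
    (hcont.continuousOn) (by rw [h0, ht1']) (fun x _ => hderiv x)
  obtain ⟨b, hbIoo, hbz⟩ := exists_hasDerivAt_eq_zero hlt
    (hcont.continuousOn) (by rw [ht1', ht2']) (fun x _ => hderiv x)
  have hab : a < b := lt_trans haIoo.2 hbIoo.1
  have ha0 : 0 < a := haIoo.1
  have hb1 : b ≤ 1 := le_of_lt (lt_trans hbIoo.2 ht₂.2)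
  have hkey := key_ineq g hc hpos hconc ha0 hab hb1
  have ea : (∫ x in (0:ℝ)..a, g x) = S * g a := by linarith
  have eb : (∫ x in (0:ℝ)..b, g x) = S * g b := by linarith
  rw [ea, eb] at hkey
  nlinarith [hpos a, hpos b]

/-- For a continuous, strictly positive, strictly log-concave
density f on [0,1] with S ∈ (0, 1 - E[θ]), the function
g(t) = E[θ | θ ≤ t] + S - t has at most one zero in (0,1): the laissez-faire
cutoff θ₀, when it exists with θ₀ > 0, is unique. -/
theorem stmt_2 (f : ℝ → ℝ) (S : ℝ)
    (hf_cont : ContinuousOn f (Set.Icc 0 1))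
    (hf_pos : ∀ x ∈ Set.Icc (0:ℝ) 1, 0 < f x)
    (hf_density : (∫ x in (0:ℝ)..1, f x) = 1)
    (hf_logconc : StrictConcaveOn ℝ (Set.Icc 0 1) (fun x => Real.log (f x)))
    (hS0 : 0 < S) (hS1 : S < 1 - ∫ x in (0:ℝ)..1, x * f x) :
    ∀ t₁ ∈ Set.Ioo (0:ℝ) 1, ∀ t₂ ∈ Set.Ioo (0:ℝ) 1,
      condMean f t₁ + S - t₁ = 0 → condMean f t₂ + S - t₂ = 0 → t₁ = t₂ := by
  -- clamp f to a globally continuous positive function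
  set g : ℝ → ℝ := fun x => f (max 0 (min x 1)) with hgdef
  have hclamp : ∀ x, max 0 (min x 1) ∈ Set.Icc (0:ℝ) 1 := by
    intro x
    constructor
    · exact le_max_left 0 _
    · exact max_le (by norm_num) (min_le_right x 1)
  have hgeq : ∀ x ∈ Set.Icc (0:ℝ) 1, g x = f x := by
    intro x hx
    have : max 0 (min x 1) = x := by
      rw [min_eq_left hx.2, max_eq_right hx.1]
    simp [hgdef, this]
  have hgc : Continuous g := by
    apply hf_cont.comp_continuous
    · exact continuous_const.max (continuous_id.min continuous_const)
    · exact hclamp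
  have hgpos : ∀ x, 0 < g x := fun x => hf_pos _ (hclamp x)
  have hgconc : ConcaveOn ℝ (Set.Icc 0 1) (fun x => Real.log (g x)) := by
    have hfc' : ConcaveOn ℝ (Set.Icc 0 1) (fun x => Real.log (f x)) :=
      hf_logconc.concaveOn
    refine ⟨convex_Icc 0 1, fun x hx y hy p q hp hq hpq => ?_⟩
    have hmem : p • x + q • y ∈ Set.Icc (0:ℝ) 1 := (convex_Icc 0 1) hx hy hp hq hpq
    simp only [hgeq x hx, hgeq y hy, hgeq _ hmem]
    exact hfc'.2 hx hy hp hq hpq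
  -- integrals over [0,t] agree for t ∈ [0,1]
  have hIeq : ∀ t ∈ Set.Icc (0:ℝ) 1, (∫ x in (0:ℝ)..t, f x) = ∫ x in (0:ℝ)..t, g x := by
    intro t ht
    apply intervalIntegral.integral_congr
    intro x hx
    rw [Set.uIcc_of_le ht.1] at hx
    show f x = g x
    exact (hgeq x ⟨hx.1, hx.2.trans ht.2⟩).symm
  have hNeq : ∀ t ∈ Set.Icc (0:ℝ) 1, (∫ x in (0:ℝ)..t, x * f x) = ∫ x in (0:ℝ)..t, x * g x := by
    intro t ht
    apply intervalIntegral.integral_congr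
    intro x hx
    rw [Set.uIcc_of_le ht.1] at hx
    show x * f x = x * g x
    rw [hgeq x ⟨hx.1, hx.2.trans ht.2⟩]
  -- zero of the condMean equation gives zero of h
  have hzero : ∀ t ∈ Set.Ioo (0:ℝ) 1, condMean f t + S - t = 0 →
      (∫ x in (0:ℝ)..t, x * g x) + (S - t) * (∫ x in (0:ℝ)..t, g x) = 0 := by
    intro t ht hz
    have htI : t ∈ Set.Icc (0:ℝ) 1 := ⟨ht.1.le, ht.2.le⟩
    have hDpos : 0 < ∫ x in (0:ℝ)..t, g x :=
      intervalIntegral.intervalIntegral_pos_of_pos (hgc.intervalIntegrable _ _) hgpos ht.1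
    have hcm : condMean f t = (∫ x in (0:ℝ)..t, x * g x) / (∫ x in (0:ℝ)..t, g x) := by
      rw [condMean, hIeq t htI, hNeq t htI]
    rw [hcm] at hz
    have : (∫ x in (0:ℝ)..t, x * g x) / (∫ x in (0:ℝ)..t, g x) = t - S := by linarith
    have := (div_eq_iff (ne_of_gt hDpos)).mp this
    rw [this]; ring
  intro t₁ ht₁ t₂ ht₂ hz₁ hz₂
  rcases lt_trichotomy t₁ t₂ with hlt | heq | hgt
  · exact absurd (aux_uniq g S hgc hgpos hgconc ht₁ ht₂ hlt
      (hzero t₁ ht₁ hz₁) (hzero t₂ ht₂ hz₂)) (by simp)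
  · exact heq
  · exact absurd (aux_uniq g S hgc hgpos hgconc ht₂ ht₁ hgt
      (hzero t₂ ht₂ hz₂) (hzero t₁ ht₁ hz₁)) (by simp)
end

section
/- Suppose μ_g, μ_m ≥ 0 with μ_g + μ_m = 1, μ_m > 0, and real numbers θ̄_g, θ̄_m satisfy the feasibility condition μ_g·θ̄_g + μ_m·θ̄_m = E[θ | θ ≤ p_g + S] and the market-clearing condition θ̄_m = p_g, where p_g > p₀ and θ₀ = p₀ + S is the unique solution of θ₀ - S = E[θ | θ ≤ θ₀]. Then θ̄_g < θ̄_m; that is, the average asset value sold to the government is strictly below the average value sold to the market (dregs-skimming). -/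
/-- dregs-skimming, Theorem 1(ii): if fractions μ_g, μ_m ≥ 0 with
μ_g + μ_m = 1, μ_m > 0, and average values θ̄_g, θ̄_m satisfy the feasibility
condition μ_g θ̄_g + μ_m θ̄_m = E[θ | θ ≤ p_g + S] and the market-clearing
condition θ̄_m = p_g, where p_g > p₀ and θ₀ = p₀ + S is the unique solution of
θ₀ - S = E[θ | θ ≤ θ₀] (uniqueness via strict monotonicity of
t ↦ E[θ|θ≤t] + S - t), then θ̄_g < θ̄_m. -/
theorem stmt_4 (f : ℝ → ℝ) (S pg p₀ θ₀ μg μm θbarg θbarm : ℝ)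
    (hS : 0 < S)
    (hanti : StrictAntiOn (fun t => condMean f t + S - t) (Set.Ioc 0 1))
    (hθ₀ : θ₀ ∈ Set.Ioo (0:ℝ) 1) (hθ₀eq : θ₀ - S = condMean f θ₀)
    (hp₀ : p₀ = θ₀ - S)
    (hpg : pg > p₀) (hpgS : pg + S ≤ 1)
    (hμg : 0 ≤ μg) (hμm : 0 < μm) (hsum : μg + μm = 1)
    (hfeas : μg * θbarg + μm * θbarm = condMean f (pg + S))
    (hclear : θbarm = pg) :
    θbarg < θbarm := by
  have hθ₀mem : θ₀ ∈ Set.Ioc (0:ℝ) 1 := ⟨hθ₀.1, le_of_lt hθ₀.2⟩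
  have hlt : θ₀ < pg + S := by
    have : θ₀ - S < pg := hp₀ ▸ hpg
    linarith
  have hmem : pg + S ∈ Set.Ioc (0:ℝ) 1 := ⟨lt_trans hθ₀.1 hlt, hpgS⟩
  have h := hanti hθ₀mem hmem hlt
  simp only at h
  have hkey : condMean f (pg + S) < pg := by
    have : condMean f θ₀ + S - θ₀ = 0 := by rw [← hθ₀eq]; ring
    linarith
  have hμgpos : 0 < μg := by
    rcases lt_or_eq_of_le hμg with h' | h'
    · exact h'
    · exfalso
      have : μm = 1 := by linarith
      rw [← h', this] at hfeas
      simp [hclear] at hfeas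
      linarith
  have : μg * θbarg + μm * pg < (μg + μm) * pg := by
    rw [hsum, one_mul]
    calc μg * θbarg + μm * pg = condMean f (pg + S) := by rw [hclear] at hfeas; exact hfeas
    _ < pg := hkey
  have : μg * θbarg < μg * pg := by ring_nf at this ⊢; linarith
  rw [hclear]
  exact lt_of_mul_lt_mul_left this (le_of_lt hμgpos)
end

section
/- In a short-lived stimulation equilibrium, the cutoff type indifference and no-arbitrage conditions—(i) p_g + θ̄_g = 2θ̄_m, (ii) 2θ̄_m + 2S = θ̂ + p_g + S, and (iii) θ̄_g < θ̄_m with μ_gθ̄_g + μ_mθ̄_m = E[θ | θ ≤ θ̂], μ_g + μ_m = 1, μ_g, μ_m > 0—imply that θ̂ < θ₀, where θ₀ is the unique solution of θ₀ = E[θ | θ ≤ θ₀] + S. -/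
/-- Theorem 2(ii), part θ̂ < θ₀: in a short-lived stimulation
equilibrium, the conditions (i) p_g + θ̄_g = 2θ̄_m, (ii) 2θ̄_m + 2S = θ̂ + p_g + S,
(iii) θ̄_g < θ̄_m with μ_gθ̄_g + μ_mθ̄_m = E[θ | θ ≤ θ̂], μ_g + μ_m = 1,
μ_g, μ_m > 0, imply θ̂ < θ₀, where θ₀ ∈ (0,1) is the unique solution of
θ₀ = E[θ | θ ≤ θ₀] + S (unique since t ↦ E[θ|θ≤t]+S-t is strictly decreasing). -/
theorem stmt_6 (f : ℝ → ℝ) (S pg p₀ θ₀ θhat μg μm θbarg θbarm : ℝ)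
    (hS : 0 < S)
    (hanti : StrictAntiOn (fun t => condMean f t + S - t) (Set.Ioc 0 1))
    (hθ₀ : θ₀ ∈ Set.Ioo (0:ℝ) 1) (hθ₀eq : θ₀ = condMean f θ₀ + S)
    (hp₀ : p₀ = θ₀ - S) (hpg : pg > p₀)
    (hθhat : θhat ∈ Set.Ioo (0:ℝ) 1)
    (harb : pg + θbarg = 2 * θbarm)
    (hindiff : 2 * θbarm + 2 * S = θhat + pg + S)
    (horder : θbarg < θbarm)
    (hfeas : μg * θbarg + μm * θbarm = condMean f θhat)
    (hsum : μg + μm = 1) (hμg : 0 < μg) (hμm : 0 < μm) :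
    θhat < θ₀ := by
  -- From (i) and (ii): θ̂ = θ̄_g + S
  have hhat : θhat = θbarg + S := by linarith
  -- θ̄_g < E[θ | θ ≤ θ̂]
  have hlt : θbarg < condMean f θhat := by
    have h1 : μm * θbarg < μm * θbarm := mul_lt_mul_of_pos_left horder hμm
    have h2 : (μg + μm) * θbarg = θbarg := by rw [hsum, one_mul]
    nlinarith [h1, h2]
  have hval : condMean f θhat + S - θhat > condMean f θ₀ + S - θ₀ := by
    rw [← hθ₀eq]; linarith
  by_contra h
  push_neg at h
  rcases eq_or_lt_of_le h with h | h
  · rw [h] at hval; exact lt_irrefl _ hval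
  · have := hanti ⟨hθ₀.1, le_of_lt hθ₀.2⟩ ⟨hθhat.1, le_of_lt hθhat.2⟩ h
    simp only at this
    linarith
end

section
/- In a delayed stimulation equilibrium with both μ_g > 0 and μ_m > 0, the no-arbitrage conditions p_g + p₂ᵍ = p_m + p₂ᵐ and p₂ᵐ = p_g force p₂ᵍ = p_m; combined with the zero-profit conditions p₂ᵍ = θ̄_g, p_m = θ̄_m and the feasibility condition μ_gθ̄_g + μ_mθ̄_m = E[θ | θ ≤ θ̂], these give θ̄_g = θ̄_m = E[θ | θ ≤ θ̂]; and the marginal-type indifference p_m + S = θ̂ then implies θ̂ = θ₀ and p_m = p₂ᵍ = p₀. -/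
/-- Theorem 3, case μ_g, μ_m > 0: in a delayed stimulation
equilibrium, the no-arbitrage conditions p_g + p₂ᵍ = p_m + p₂ᵐ and p₂ᵐ = p_g
force p₂ᵍ = p_m; combined with zero profit (p₂ᵍ = θ̄_g, p_m = θ̄_m) and
feasibility (μ_gθ̄_g + μ_mθ̄_m = E[θ | θ ≤ θ̂]) these give
θ̄_g = θ̄_m = E[θ | θ ≤ θ̂]; the marginal-type indifference p_m + S = θ̂ then
implies θ̂ = θ₀ and p_m = p₂ᵍ = p₀. -/
theorem stmt_8 (f : ℝ → ℝ) (S pg pm p2g p2m p₀ θ₀ θhat μg μm θbarg θbarm : ℝ)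
    (hS : 0 < S)
    (hanti : StrictAntiOn (fun t => condMean f t + S - t) (Set.Ioc 0 1))
    (hθ₀ : θ₀ ∈ Set.Ioo (0:ℝ) 1) (hθ₀eq : θ₀ = condMean f θ₀ + S)
    (hp₀ : p₀ = condMean f θ₀)
    (hθhat : θhat ∈ Set.Ioc (0:ℝ) 1)
    (hμg : 0 < μg) (hμm : 0 < μm) (hsum : μg + μm = 1)
    (hnoarb : pg + p2g = pm + p2m) (hp2m : p2m = pg)
    (hzg : p2g = θbarg) (hzm : pm = θbarm)
    (hfeas : μg * θbarg + μm * θbarm = condMean f θhat)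
    (hindiff : pm + S = θhat) :
    p2g = pm ∧ θbarg = θbarm ∧ θbarm = condMean f θhat ∧
      θhat = θ₀ ∧ pm = p₀ ∧ p2g = p₀ := by
  have h1 : p2g = pm := by linarith
  have h2 : θbarg = θbarm := by linarith
  have h3 : θbarm = condMean f θhat := by
    rw [h2] at hfeas
    have : (μg + μm) * θbarm = condMean f θhat := by rw [add_mul]; linarith
    rw [hsum, one_mul] at this; exact this
  have hg : condMean f θhat + S - θhat = 0 := by
    have : pm = condMean f θhat := by rw [hzm, h3]
    linarith
  have hg0 : condMean f θ₀ + S - θ₀ = 0 := by linarith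
  have hθ₀' : θ₀ ∈ Set.Ioc (0:ℝ) 1 := ⟨hθ₀.1, le_of_lt hθ₀.2⟩
  have h4 : θhat = θ₀ :=
    hanti.injOn hθhat hθ₀' (by show condMean f θhat + S - θhat = condMean f θ₀ + S - θ₀; rw [hg, hg0])
  have h5 : pm = p₀ := by
    rw [hp₀, ← h4, hzm, h3]
  exact ⟨h1, h2, h3, h4, h5, h1.trans h5⟩
end

section
/- Let f be a strictly positive, strictly log-concave, continuously differentiable density on [0,1] and fix S > 0, a ∈ [0,1). Define γ(a) = max{x > a : x - S ≤ E[θ | a ≤ θ ≤ x]} (taking the max with the convention that x ranges in (a,1]). Then γ(a) is well defined, and γ is continuous and (weakly) increasing in a. -/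
/-- Truncated conditional expectation E[θ | a ≤ θ ≤ x] for a density `f`. -/
noncomputable def truncMean (f : ℝ → ℝ) (a x : ℝ) : ℝ :=
  (∫ t in a..x, t * f t) / (∫ t in a..x, f t)

open Set intervalIntegral MeasureTheory

namespace Stmt12Aux

variable {f : ℝ → ℝ}

noncomputable def Fp (f : ℝ → ℝ) (x : ℝ) : ℝ := ∫ t in (0:ℝ)..x, f t
noncomputable def Pp (f : ℝ → ℝ) (x : ℝ) : ℝ := ∫ t in (0:ℝ)..x, Fp f t
noncomputable def dn (f : ℝ → ℝ) (a x : ℝ) : ℝ := Fp f x - Fp f a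
noncomputable def rr (f : ℝ → ℝ) (a x : ℝ) : ℝ := Pp f x - Pp f a - (x - a) * Fp f a

lemma hasDerivAt_Fp (hc : Continuous f) (x : ℝ) : HasDerivAt (Fp f) (f x) x :=
  integral_hasDerivAt_right (hc.intervalIntegrable _ _)
    (hc.stronglyMeasurableAtFilter _ _) hc.continuousAt

lemma continuous_Fp (hc : Continuous f) : Continuous (Fp f) :=
  continuous_iff_continuousAt.2 fun x => (hasDerivAt_Fp hc x).continuousAt

lemma hasDerivAt_Pp (hc : Continuous f) (x : ℝ) : HasDerivAt (Pp f) (Fp f x) x :=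
  integral_hasDerivAt_right ((continuous_Fp hc).intervalIntegrable _ _)
    ((continuous_Fp hc).stronglyMeasurableAtFilter _ _) (continuous_Fp hc).continuousAt

lemma continuous_Pp (hc : Continuous f) : Continuous (Pp f) :=
  continuous_iff_continuousAt.2 fun x => (hasDerivAt_Pp hc x).continuousAt

lemma dn_eq (hc : Continuous f) (a x : ℝ) : dn f a x = ∫ t in a..x, f t := by
  have h := integral_add_adjacent_intervals (μ := volume) (a := (0:ℝ)) (b := a) (c := x)
    (hc.intervalIntegrable _ _) (hc.intervalIntegrable _ _)
  simp only [dn, Fp]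
  linarith

lemma rr_eq (hc : Continuous f) (a x : ℝ) : rr f a x = ∫ t in a..x, dn f a t := by
  have h := integral_add_adjacent_intervals (μ := volume) (a := (0:ℝ)) (b := a) (c := x)
    ((continuous_Fp hc).intervalIntegrable _ _) ((continuous_Fp hc).intervalIntegrable _ _)
  have h2 : (∫ t in a..x, dn f a t) = (∫ t in a..x, Fp f t) - (x - a) * Fp f a := by
    simp only [dn]
    rw [intervalIntegral.integral_sub ((continuous_Fp hc).intervalIntegrable _ _)
      (intervalIntegrable_const)]
    simp [mul_comm]
  rw [h2]
  simp only [rr, Pp]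
  linarith

lemma hasDerivAt_dn (hc : Continuous f) (a x : ℝ) :
    HasDerivAt (fun y => dn f a y) (f x) x := (hasDerivAt_Fp hc x).sub_const _

lemma hasDerivAt_rr (hc : Continuous f) (a x : ℝ) :
    HasDerivAt (fun y => rr f a y) (dn f a x) x := by
  have h1 : HasDerivAt (fun y : ℝ => (y - a) * Fp f a) (Fp f a) x := by
    simpa using ((hasDerivAt_id x).sub_const a).mul_const (Fp f a)
  exact ((hasDerivAt_Pp hc x).sub_const (Pp f a)).sub h1

lemma N_eq (hc : Continuous f) (a x : ℝ) :
    (∫ t in a..x, t * f t) = x * dn f a x - rr f a x := by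
  have hct : Continuous (fun t : ℝ => t * f t) := continuous_id.mul hc
  have hg : ∀ y : ℝ, HasDerivAt
      (fun y => (∫ t in a..y, t * f t) - (y * dn f a y - rr f a y)) 0 y := by
    intro y
    have h1 : HasDerivAt (fun y => ∫ t in a..y, t * f t) (y * f y) y :=
      integral_hasDerivAt_right (hct.intervalIntegrable _ _)
        (hct.stronglyMeasurableAtFilter _ _) hct.continuousAt
    have h2 : HasDerivAt (fun y => y * dn f a y) (1 * dn f a y + y * f y) y :=
      (hasDerivAt_id y).mul (hasDerivAt_dn hc a y)
    have h3 := hasDerivAt_rr hc a y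
    have := h1.sub (h2.sub h3)
    exact this.congr_deriv (by ring)
  have hconst := is_const_of_deriv_eq_zero
    (fun y => (hg y).differentiableAt) (fun y => (hg y).deriv) x a
  have ha : dn f a a = 0 := by simp [dn]
  have hra : rr f a a = 0 := by simp [rr]
  simp only [intervalIntegral.integral_same, ha, hra] at hconst
  linarith [hconst]

lemma truncMean_eq (hc : Continuous f) {a x : ℝ} (h : dn f a x ≠ 0) :
    truncMean f a x = x - rr f a x / dn f a x := by
  rw [truncMean, N_eq hc, ← dn_eq hc]
  field_simp


variable {S : ℝ}

lemma dn_pos (hc : Continuous f) (hf_pos : ∀ x ∈ Set.Icc (0:ℝ) 1, 0 < f x)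
    {a x : ℝ} (h0 : 0 ≤ a) (hax : a < x) (hx1 : x ≤ 1) : 0 < dn f a x := by
  rw [dn_eq hc]
  exact intervalIntegral_pos_of_pos_on (hc.intervalIntegrable _ _)
    (fun t ht => hf_pos t ⟨by linarith [ht.1], by linarith [ht.2]⟩) hax

lemma dn_nonneg (hc : Continuous f) (hf_pos : ∀ x ∈ Set.Icc (0:ℝ) 1, 0 < f x)
    {a x : ℝ} (h0 : 0 ≤ a) (hax : a ≤ x) (hx1 : x ≤ 1) : 0 ≤ dn f a x := by
  rcases eq_or_lt_of_le hax with rfl | h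
  · simp [dn]
  · exact (dn_pos hc hf_pos h0 h hx1).le

lemma rr_pos (hc : Continuous f) (hf_pos : ∀ x ∈ Set.Icc (0:ℝ) 1, 0 < f x)
    {a x : ℝ} (h0 : 0 ≤ a) (hax : a < x) (hx1 : x ≤ 1) : 0 < rr f a x := by
  rw [rr_eq hc]
  exact intervalIntegral_pos_of_pos_on ((continuous_Fp hc).sub continuous_const
    |>.intervalIntegrable _ _)
    (fun t ht => dn_pos hc hf_pos h0 ht.1 (by linarith [ht.2])) hax

lemma rr_le (hc : Continuous f) (hf_pos : ∀ x ∈ Set.Icc (0:ℝ) 1, 0 < f x)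
    {a x : ℝ} (h0 : 0 ≤ a) (hax : a < x) (hx1 : x ≤ 1) :
    rr f a x ≤ (x - a) * dn f a x := by
  rw [rr_eq hc]
  have h := intervalIntegral.integral_mono_on (μ := MeasureTheory.volume) (f := fun t => dn f a t)
    (g := fun _ => dn f a x) hax.le
    (((continuous_Fp hc).sub continuous_const).intervalIntegrable _ _)
    (intervalIntegrable_const)
    (fun t ht => by
      have : 0 ≤ dn f t x := dn_nonneg hc hf_pos (by linarith [ht.1]) ht.2 hx1
      simp only [dn] at this ⊢
      linarith)
  simpa [mul_comm] using h

lemma logderiv_anti (hf_smooth : ContDiff ℝ 1 f)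
    (hf_pos : ∀ x ∈ Set.Icc (0:ℝ) 1, 0 < f x)
    (hf_logconc : StrictConcaveOn ℝ (Set.Icc 0 1) (fun x => Real.log (f x)))
    {t x : ℝ} (ht : t ∈ Set.Icc (0:ℝ) 1) (hx : x ∈ Set.Icc (0:ℝ) 1) (htx : t < x) :
    deriv f x * f t < deriv f t * f x := by
  have hd : Differentiable ℝ f := hf_smooth.differentiable one_ne_zero
  have hld : ∀ y ∈ Set.Icc (0:ℝ) 1,
      HasDerivAt (fun z => Real.log (f z)) (deriv f y / f y) y := fun y hy =>
    (hd y).hasDerivAt.log (hf_pos y hy).ne'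
  have hanti := hf_logconc.strictAntiOn_deriv
    (fun y hy => (hld y hy).differentiableAt)
  have h1 := hanti ht hx htx
  rw [(hld t ht).deriv, (hld x hx).deriv] at h1
  have hft := hf_pos t ht
  have hfx := hf_pos x hx
  rw [div_lt_div_iff₀ hfx hft] at h1
  linarith

lemma keyB (hf_smooth : ContDiff ℝ 1 f)
    (hf_pos : ∀ x ∈ Set.Icc (0:ℝ) 1, 0 < f x)
    (hf_logconc : StrictConcaveOn ℝ (Set.Icc 0 1) (fun x => Real.log (f x)))
    {a x : ℝ} (h0 : 0 ≤ a) (hax : a < x) (hx1 : x ≤ 1) :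
    deriv f x * dn f a x < f x * f x := by
  have hc : Continuous f := hf_smooth.continuous
  have hc' : Continuous (deriv f) := hf_smooth.continuous_deriv le_rfl
  have hxm : x ∈ Set.Icc (0:ℝ) 1 := ⟨by linarith, hx1⟩
  have ham : a ∈ Set.Icc (0:ℝ) 1 := ⟨h0, by linarith⟩
  have hpos : 0 < ∫ t in a..x, (deriv f t * f x - deriv f x * f t) := by
    refine intervalIntegral_pos_of_pos_on
      (((hc'.mul continuous_const).sub (continuous_const.mul hc)).intervalIntegrable _ _)
      (fun t ht => ?_) hax
    have := logderiv_anti hf_smooth hf_pos hf_logconc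
      (t := t) (x := x) ⟨by linarith [ht.1], by linarith [ht.2]⟩ hxm (ht.2)
    linarith
  rw [intervalIntegral.integral_sub (f := fun t => deriv f t * f x) (g := fun t => deriv f x * f t) ((hc'.mul continuous_const).intervalIntegrable _ _)
    ((continuous_const.mul hc).intervalIntegrable _ _),
    intervalIntegral.integral_mul_const, intervalIntegral.integral_const_mul,
    intervalIntegral.integral_deriv_eq_sub
      (fun t _ => (hf_smooth.differentiable one_ne_zero) t) (hc'.intervalIntegrable _ _)] at hpos
  rw [dn_eq hc]
  have hfa := hf_pos a ham
  have hfx := hf_pos x hxm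
  nlinarith

lemma ratio_anti (hf_smooth : ContDiff ℝ 1 f)
    (hf_pos : ∀ x ∈ Set.Icc (0:ℝ) 1, 0 < f x)
    (hf_logconc : StrictConcaveOn ℝ (Set.Icc 0 1) (fun x => Real.log (f x)))
    {a : ℝ} (ha : a ∈ Set.Ico (0:ℝ) 1) :
    StrictAntiOn (fun x => f x / dn f a x) (Set.Ioc a 1) := by
  have hc : Continuous f := hf_smooth.continuous
  refine strictAntiOn_of_deriv_neg (convex_Ioc a 1) ?_ ?_
  · intro x hx
    exact ((hc.continuousAt).continuousWithinAt.div
      ((continuous_Fp hc).sub continuous_const).continuousAt.continuousWithinAt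
      (dn_pos hc hf_pos ha.1 hx.1 hx.2).ne')
  · intro x hx
    rw [interior_Ioc] at hx
    have hdn := dn_pos hc hf_pos ha.1 hx.1 hx.2.le
    have hder : HasDerivAt (fun x => f x / dn f a x)
        ((deriv f x * dn f a x - f x * f x) / (dn f a x) ^ 2) x :=
      ((hf_smooth.differentiable one_ne_zero x).hasDerivAt).div (hasDerivAt_dn hc a x) hdn.ne'
    rw [hder.deriv]
    exact div_neg_of_neg_of_pos
      (by linarith [keyB hf_smooth hf_pos hf_logconc ha.1 hx.1 hx.2.le]) (by positivity)

lemma keyC (hf_smooth : ContDiff ℝ 1 f)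
    (hf_pos : ∀ x ∈ Set.Icc (0:ℝ) 1, 0 < f x)
    (hf_logconc : StrictConcaveOn ℝ (Set.Icc 0 1) (fun x => Real.log (f x)))
    {a x : ℝ} (ha : a ∈ Set.Ico (0:ℝ) 1) (hx : x ∈ Set.Ioo a 1) :
    f x * rr f a x < dn f a x ^ 2 := by
  have hc : Continuous f := hf_smooth.continuous
  have hpos : 0 < ∫ t in a..x, (f t * dn f a x - f x * dn f a t) := by
    refine intervalIntegral_pos_of_pos_on
      (((hc.mul continuous_const).sub
        (continuous_const.mul ((continuous_Fp hc).sub continuous_const))).intervalIntegrable _ _)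
      (fun t ht => ?_) hx.1
    have h1 := ratio_anti hf_smooth hf_pos hf_logconc ha
      (Set.mem_Ioc.2 ⟨ht.1, by linarith [ht.2, hx.2]⟩)
      (Set.mem_Ioc.2 ⟨lt_trans ht.1 ht.2, hx.2.le⟩) ht.2
    have hdt := dn_pos hc hf_pos ha.1 ht.1 (by linarith [ht.2, hx.2])
    have hdx := dn_pos hc hf_pos ha.1 hx.1 hx.2.le
    rw [div_lt_div_iff₀ hdx hdt] at h1
    linarith
  have hi1 : IntervalIntegrable (fun t => f t * dn f a x) volume a x :=
    (hc.mul continuous_const).intervalIntegrable _ _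
  have hi2 : IntervalIntegrable (fun t => f x * dn f a t) volume a x :=
    (continuous_const.mul ((continuous_Fp hc).sub continuous_const)).intervalIntegrable _ _
  rw [intervalIntegral.integral_sub hi1 hi2,
    intervalIntegral.integral_mul_const, intervalIntegral.integral_const_mul,
    ← dn_eq hc, ← rr_eq hc] at hpos
  nlinarith

lemma Gmono (hf_smooth : ContDiff ℝ 1 f)
    (hf_pos : ∀ x ∈ Set.Icc (0:ℝ) 1, 0 < f x)
    (hf_logconc : StrictConcaveOn ℝ (Set.Icc 0 1) (fun x => Real.log (f x)))
    {a : ℝ} (ha : a ∈ Set.Ico (0:ℝ) 1) :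
    StrictMonoOn (fun x => rr f a x / dn f a x) (Set.Ioc a 1) := by
  have hc : Continuous f := hf_smooth.continuous
  refine strictMonoOn_of_deriv_pos (convex_Ioc a 1) ?_ ?_
  · intro x hx
    refine ContinuousWithinAt.div ?_ ?_ (dn_pos hc hf_pos ha.1 hx.1 hx.2).ne'
    · exact (((continuous_Pp hc).sub continuous_const).sub
        ((continuous_id.sub continuous_const).mul continuous_const)).continuousAt.continuousWithinAt
    · exact ((continuous_Fp hc).sub continuous_const).continuousAt.continuousWithinAt
  · intro x hx
    rw [interior_Ioc] at hx
    have hdn := dn_pos hc hf_pos ha.1 hx.1 hx.2.le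
    have hder : HasDerivAt (fun x => rr f a x / dn f a x)
        ((dn f a x * dn f a x - rr f a x * f x) / (dn f a x) ^ 2) x :=
      (hasDerivAt_rr hc a x).div (hasDerivAt_dn hc a x) hdn.ne'
    rw [hder.deriv]
    have := keyC hf_smooth hf_pos hf_logconc ha hx
    refine div_pos (by nlinarith) (by positivity)

lemma contInA (hc : Continuous f) (S x : ℝ) :
    Continuous (fun a => S * dn f a x - rr f a x) := by
  have hF := continuous_Fp hc
  have hP := continuous_Pp hc
  unfold dn rr
  exact (continuous_const.mul (continuous_const.sub hF)).sub
    ((continuous_const.sub hP).sub ((continuous_const.sub continuous_id).mul hF))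

def Tset (f : ℝ → ℝ) (S a : ℝ) : Set ℝ :=
  {x | x ∈ Set.Ioc a 1 ∧ x - S ≤ truncMean f a x}

lemma mem_Tset_iff (hc : Continuous f) {S a : ℝ} (ha : a ∈ Set.Ico (0:ℝ) 1)
    (hf_pos : ∀ x ∈ Set.Icc (0:ℝ) 1, 0 < f x) {x : ℝ} :
    x ∈ Tset f S a ↔
      (x ∈ Set.Ioc a 1 ∧ rr f a x ≤ S * dn f a x) := by
  simp only [Tset, Set.mem_setOf_eq]
  constructor
  · rintro ⟨hx, hcond⟩
    have hdn := dn_pos hc hf_pos ha.1 hx.1 hx.2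
    rw [truncMean_eq hc hdn.ne'] at hcond
    exact ⟨hx, by rw [← div_le_iff₀ hdn] at *; linarith⟩
  · rintro ⟨hx, hcond⟩
    have hdn := dn_pos hc hf_pos ha.1 hx.1 hx.2
    rw [truncMean_eq hc hdn.ne']
    rw [← div_le_iff₀ hdn] at hcond
    exact ⟨hx, by linarith⟩

lemma exists_greatest (hf_smooth : ContDiff ℝ 1 f)
    (hf_pos : ∀ x ∈ Set.Icc (0:ℝ) 1, 0 < f x)
    (hf_logconc : StrictConcaveOn ℝ (Set.Icc 0 1) (fun x => Real.log (f x)))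
    {S : ℝ} (hS : 0 < S) {a : ℝ} (ha : a ∈ Set.Ico (0:ℝ) 1) :
    ∃ m, IsGreatest (Tset f S a) m := by
  have hc : Continuous f := hf_smooth.continuous
  by_cases h1 : rr f a 1 ≤ S * dn f a 1
  · refine ⟨1, ?_, fun x hx => hx.1.2⟩
    exact (mem_Tset_iff hc ha hf_pos).2 ⟨⟨ha.2, le_refl 1⟩, h1⟩
  · push_neg at h1
    set x₀ := min 1 (a + S) with hx₀
    have hax₀ : a < x₀ := lt_min (by linarith [ha.2]) (by linarith)
    have hx₀1 : x₀ ≤ 1 := min_le_left _ _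
    have hcont : ContinuousOn (fun x => rr f a x / dn f a x) (Set.Icc x₀ 1) := by
      intro x hx
      have hdn := dn_pos hc hf_pos ha.1 (lt_of_lt_of_le hax₀ hx.1) hx.2
      exact (ContinuousAt.continuousWithinAt (by
        refine ContinuousAt.div ?_ ?_ hdn.ne'
        · exact (((continuous_Pp hc).sub continuous_const).sub
            ((continuous_id.sub continuous_const).mul continuous_const)).continuousAt
        · exact ((continuous_Fp hc).sub continuous_const).continuousAt))
    have hdn0 := dn_pos hc hf_pos ha.1 hax₀ hx₀1
    have hdn1 := dn_pos hc hf_pos ha.1 (lt_of_lt_of_le hax₀ hx₀1) le_rfl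
    have hφ0 : rr f a x₀ / dn f a x₀ ≤ S := by
      rw [div_le_iff₀ hdn0]
      calc rr f a x₀ ≤ (x₀ - a) * dn f a x₀ := rr_le hc hf_pos ha.1 hax₀ hx₀1
        _ ≤ S * dn f a x₀ := by
            have : x₀ - a ≤ S := by
              have := min_le_right 1 (a + S); linarith
            nlinarith
    have hφ1 : S ≤ rr f a 1 / dn f a 1 := by
      rw [le_div_iff₀ hdn1]; linarith
    obtain ⟨m, hm, hφm⟩ := intermediate_value_Icc hx₀1 hcont ⟨hφ0, hφ1⟩
    simp only at hφm
    have hmIoc : m ∈ Set.Ioc a 1 := ⟨lt_of_lt_of_le hax₀ hm.1, hm.2⟩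
    have hdnm := dn_pos hc hf_pos ha.1 hmIoc.1 hmIoc.2
    refine ⟨m, (mem_Tset_iff hc ha hf_pos).2 ⟨hmIoc, ?_⟩, fun x hx => ?_⟩
    · rw [div_eq_iff hdnm.ne'] at hφm
      rw [hφm]
    · by_contra hxm
      push_neg at hxm
      have hx' := (mem_Tset_iff hc ha hf_pos).1 hx
      have hmono := Gmono hf_smooth hf_pos hf_logconc ha hmIoc hx'.1 hxm
      simp only at hmono
      rw [hφm] at hmono
      have hdnx := dn_pos hc hf_pos ha.1 hx'.1.1 hx'.1.2
      rw [lt_div_iff₀ hdnx] at hmono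
      linarith [hx'.2]

lemma truncMean_mono (hc : Continuous f)
    (hf_pos : ∀ x ∈ Set.Icc (0:ℝ) 1, 0 < f x)
    {a₁ a₂ y : ℝ} (h0 : 0 ≤ a₁) (h12 : a₁ ≤ a₂) (h2y : a₂ < y) (hy1 : y ≤ 1) :
    truncMean f a₁ y ≤ truncMean f a₂ y := by
  rcases eq_or_lt_of_le h12 with rfl | h12'
  · exact le_refl _
  have hfi : ∀ u v : ℝ, IntervalIntegrable f volume u v := fun u v =>
    hc.intervalIntegrable _ _
  have hti : ∀ u v : ℝ, IntervalIntegrable (fun t => t * f t) volume u v := fun u v =>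
    (continuous_id.mul hc).intervalIntegrable _ _
  set D0 := ∫ t in a₁..a₂, f t with hD0
  set D2 := ∫ t in a₂..y, f t with hD2
  set N0 := ∫ t in a₁..a₂, t * f t with hN0
  set N2 := ∫ t in a₂..y, t * f t with hN2
  have hDsplit : (∫ t in a₁..y, f t) = D0 + D2 :=
    (integral_add_adjacent_intervals (hfi a₁ a₂) (hfi a₂ y)).symm
  have hNsplit : (∫ t in a₁..y, t * f t) = N0 + N2 :=
    (integral_add_adjacent_intervals (hti a₁ a₂) (hti a₂ y)).symm
  have hD0nn : 0 ≤ D0 := intervalIntegral.integral_nonneg h12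
    (fun u hu => (hf_pos u ⟨by linarith [hu.1], by linarith [hu.2]⟩).le)
  have hD2pos : 0 < D2 := intervalIntegral_pos_of_pos_on (hfi a₂ y)
    (fun t ht => hf_pos t ⟨by linarith [ht.1], by linarith [ht.2]⟩) h2y
  have hN0le : N0 ≤ a₂ * D0 := by
    have := intervalIntegral.integral_mono_on (μ := volume)
      (f := fun t => t * f t) (g := fun t => a₂ * f t) h12 (hti a₁ a₂)
      ((continuous_const.mul hc).intervalIntegrable _ _)
      (fun u hu => mul_le_mul_of_nonneg_right hu.2
        (hf_pos u ⟨by linarith [hu.1], by linarith [hu.2]⟩).le)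
    simpa [intervalIntegral.integral_const_mul] using this
  have hN2ge : a₂ * D2 ≤ N2 := by
    have := intervalIntegral.integral_mono_on (μ := volume)
      (f := fun t => a₂ * f t) (g := fun t => t * f t) h2y.le
      ((continuous_const.mul hc).intervalIntegrable _ _) (hti a₂ y)
      (fun u hu => mul_le_mul_of_nonneg_right hu.1
        (hf_pos u ⟨by linarith [hu.1], by linarith [hu.2]⟩).le)
    simpa [intervalIntegral.integral_const_mul] using this
  rw [truncMean, truncMean, hDsplit, hNsplit, ← hD2, ← hN2]
  rw [div_le_div_iff₀ (by linarith) hD2pos]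
  nlinarith
end Stmt12Aux

/-- for a strictly positive, strictly log-concave, continuously
differentiable density f on [0,1] and S > 0, the function
γ(a) = max { x ∈ (a,1] : x - S ≤ E[θ | a ≤ θ ≤ x] } is well defined (the set
has a greatest element), and γ is continuous and weakly increasing on [0,1). -/
theorem stmt_12 (f : ℝ → ℝ) (S : ℝ) (hS : 0 < S)
    (hf_smooth : ContDiff ℝ 1 f)
    (hf_pos : ∀ x ∈ Set.Icc (0:ℝ) 1, 0 < f x)
    (hf_density : (∫ x in (0:ℝ)..1, f x) = 1)
    (hf_logconc : StrictConcaveOn ℝ (Set.Icc 0 1) (fun x => Real.log (f x))) :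
    ∃ γ : ℝ → ℝ,
      (∀ a ∈ Set.Ico (0:ℝ) 1,
        IsGreatest {x | x ∈ Set.Ioc a 1 ∧ x - S ≤ truncMean f a x} (γ a)) ∧
      ContinuousOn γ (Set.Ico 0 1) ∧
      MonotoneOn γ (Set.Ico 0 1) := by
  classical
  open Stmt12Aux in
  have hc : Continuous f := hf_smooth.continuous
  have hγ : ∀ a ∈ Set.Ico (0:ℝ) 1, IsGreatest (Stmt12Aux.Tset f S a) (sSup (Stmt12Aux.Tset f S a)) := by
    intro a ha
    obtain ⟨m, hm⟩ := Stmt12Aux.exists_greatest hf_smooth hf_pos hf_logconc hS ha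
    rwa [hm.csSup_eq]
  have hca : ∀ x : ℝ, Continuous (fun a => S * Stmt12Aux.dn f a x - Stmt12Aux.rr f a x) :=
    Stmt12Aux.contInA hc S
  -- (iii): if the greatest element is < 1 then equality holds there
  have heq1 : ∀ a ∈ Set.Ico (0:ℝ) 1, sSup (Stmt12Aux.Tset f S a) < 1 →
      Stmt12Aux.rr f a (sSup (Stmt12Aux.Tset f S a)) =
        S * Stmt12Aux.dn f a (sSup (Stmt12Aux.Tset f S a)) := by
    intro a ha hlt
    set m := sSup (Stmt12Aux.Tset f S a) with hmdef
    have hmem := (Stmt12Aux.mem_Tset_iff hc ha hf_pos).1 (hγ a ha).1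
    by_contra hne
    have hlt' : Stmt12Aux.rr f a m < S * Stmt12Aux.dn f a m := lt_of_le_of_ne hmem.2 hne
    have hcx : Continuous (fun x => S * Stmt12Aux.dn f a x - Stmt12Aux.rr f a x) := by
      unfold Stmt12Aux.dn Stmt12Aux.rr
      exact (continuous_const.mul ((Stmt12Aux.continuous_Fp hc).sub continuous_const)).sub
        (((Stmt12Aux.continuous_Pp hc).sub continuous_const).sub
          ((continuous_id.sub continuous_const).mul continuous_const))
    obtain ⟨δ, hδpos, hball⟩ := Metric.continuousAt_iff.1 hcx.continuousAt _
      (by linarith : (0:ℝ) < S * Stmt12Aux.dn f a m - Stmt12Aux.rr f a m)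
    set y := min 1 (m + δ/2) with hydef
    have hmy : m < y := lt_min hlt (by linarith)
    have hy1 : y ≤ 1 := min_le_left _ _
    have hdist : dist y m < δ := by
      rw [Real.dist_eq, abs_lt]
      have : y ≤ m + δ/2 := min_le_right _ _
      constructor <;> linarith
    have hby := hball hdist
    rw [Real.dist_eq] at hby
    have hby' := abs_lt.1 hby
    have hyT : y ∈ Stmt12Aux.Tset f S a := (Stmt12Aux.mem_Tset_iff hc ha hf_pos).2
      ⟨⟨lt_trans hmem.1.1 hmy, hy1⟩, by linarith⟩
    have := (hγ a ha).2 hyT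
    linarith
  refine ⟨fun a => sSup (Stmt12Aux.Tset f S a), fun a ha => hγ a ha, ?_, ?_⟩
  · -- Continuity
    intro a₀ ha₀
    rw [Metric.continuousWithinAt_iff]
    intro ε hε
    set L := sSup (Stmt12Aux.Tset f S a₀) with hLdef
    have hL := hγ a₀ ha₀
    have hLIoc : L ∈ Set.Ioc a₀ 1 := hL.1.1
    have ha₀L := hLIoc.1
    have hLcond := ((Stmt12Aux.mem_Tset_iff hc ha₀ hf_pos).1 hL.1).2
    by_cases hcase : Stmt12Aux.rr f a₀ L = S * Stmt12Aux.dn f a₀ L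
    · -- CASE B : equality at L
      set x₁ := max ((a₀ + L)/2) (L - ε/2) with hx₁def
      have hx₁lt : x₁ < L := max_lt (by linarith) (by linarith)
      have hx₁gt : a₀ < x₁ := lt_of_lt_of_le (by linarith : a₀ < (a₀+L)/2) (le_max_left _ _)
      have hx₁ge : L - ε/2 ≤ x₁ := le_max_right _ _
      have hx₁Ioc : x₁ ∈ Set.Ioc a₀ 1 := ⟨hx₁gt, by linarith [hLIoc.2]⟩
      have hGlt := Stmt12Aux.Gmono hf_smooth hf_pos hf_logconc ha₀ hx₁Ioc hLIoc hx₁lt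
      simp only at hGlt
      have hdnx₁ := Stmt12Aux.dn_pos hc hf_pos ha₀.1 hx₁gt hx₁Ioc.2
      have hdnL := Stmt12Aux.dn_pos hc hf_pos ha₀.1 ha₀L hLIoc.2
      have hGL : Stmt12Aux.rr f a₀ L / Stmt12Aux.dn f a₀ L = S := by
        rw [hcase]; field_simp
      have hpos₁ : 0 < S * Stmt12Aux.dn f a₀ x₁ - Stmt12Aux.rr f a₀ x₁ := by
        rw [hGL, div_lt_iff₀ hdnx₁] at hGlt; linarith
      obtain ⟨δ₁, hδ₁pos, hball₁⟩ := Metric.continuousAt_iff.1 (hca x₁).continuousAt _ hpos₁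
      have hlow : ∀ a ∈ Set.Ico (0:ℝ) 1, dist a a₀ < min δ₁ (x₁ - a₀) →
          x₁ ≤ sSup (Stmt12Aux.Tset f S a) := by
        intro a haI hd
        have hd₁ := hball₁ (lt_of_lt_of_le hd (min_le_left _ _))
        have hax₁ : a < x₁ := by
          rw [Real.dist_eq] at hd
          have := abs_lt.1 (lt_of_lt_of_le hd (min_le_right _ _)); linarith
        rw [Real.dist_eq] at hd₁
        have hd₁' := abs_lt.1 hd₁
        exact (hγ a haI).2 ((Stmt12Aux.mem_Tset_iff hc haI hf_pos).2
          ⟨⟨hax₁, hx₁Ioc.2⟩, by linarith⟩)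
      by_cases hL1 : L = 1
      · refine ⟨min δ₁ (x₁ - a₀), lt_min hδ₁pos (by linarith), ?_⟩
        intro a haI hd
        have h1 := hlow a haI hd
        have h2 : sSup (Stmt12Aux.Tset f S a) ≤ 1 := (hγ a haI).1.1.2
        rw [Real.dist_eq, abs_lt]
        constructor <;> [linarith; linarith]
      · have hLlt1 : L < 1 := lt_of_le_of_ne hLIoc.2 hL1
        set x₂ := min ((L+1)/2) (L + ε/2) with hx₂def
        have hx₂gt : L < x₂ := lt_min (by linarith) (by linarith)
        have hx₂le1 : x₂ ≤ 1 := le_trans (min_le_left _ _) (by linarith)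
        have hx₂le : x₂ ≤ L + ε/2 := min_le_right _ _
        have hx₂Ioc : x₂ ∈ Set.Ioc a₀ 1 := ⟨lt_trans ha₀L hx₂gt, hx₂le1⟩
        have hG2 := Stmt12Aux.Gmono hf_smooth hf_pos hf_logconc ha₀ hLIoc hx₂Ioc hx₂gt
        simp only at hG2
        have hdnx₂ := Stmt12Aux.dn_pos hc hf_pos ha₀.1 hx₂Ioc.1 hx₂le1
        have hpos₂ : 0 < Stmt12Aux.rr f a₀ x₂ - S * Stmt12Aux.dn f a₀ x₂ := by
          rw [hGL, lt_div_iff₀ hdnx₂] at hG2; linarith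
        obtain ⟨δ₂, hδ₂pos, hball₂⟩ := Metric.continuousAt_iff.1 (hca x₂).continuousAt _ hpos₂
        refine ⟨min (min δ₁ (x₁ - a₀)) (min δ₂ (L - a₀)),
          lt_min (lt_min hδ₁pos (by linarith)) (lt_min hδ₂pos (by linarith)), ?_⟩
        intro a haI hd
        have h1 := hlow a haI (lt_of_lt_of_le hd (min_le_left _ _))
        have hd₂ := hball₂ (lt_of_lt_of_le hd ((min_le_right _ _).trans (min_le_left _ _)))
        have haL : a < L := by
          rw [Real.dist_eq] at hd
          have := abs_lt.1 (lt_of_lt_of_le hd ((min_le_right _ _).trans (min_le_right _ _)))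
          linarith
        rw [Real.dist_eq] at hd₂
        have hd₂' := abs_lt.1 hd₂
        have hpos' : S * Stmt12Aux.dn f a x₂ < Stmt12Aux.rr f a x₂ := by linarith
        have hup : sSup (Stmt12Aux.Tset f S a) < x₂ := by
          by_contra hge
          push_neg at hge
          have hmem := (Stmt12Aux.mem_Tset_iff hc haI hf_pos).1 (hγ a haI).1
          have hdnx₂' := Stmt12Aux.dn_pos hc hf_pos haI.1 (lt_trans haL hx₂gt) hx₂le1
          have hdns := Stmt12Aux.dn_pos hc hf_pos haI.1 hmem.1.1 hmem.1.2
          have hmono := (Stmt12Aux.Gmono hf_smooth hf_pos hf_logconc haI).monotoneOn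
            ⟨lt_trans haL hx₂gt, hx₂le1⟩ ⟨hmem.1.1, hmem.1.2⟩ hge
          have h5 : Stmt12Aux.rr f a x₂ / Stmt12Aux.dn f a x₂ ≤ S :=
            le_trans hmono (by rw [div_le_iff₀ hdns]; exact hmem.2)
          rw [div_le_iff₀ hdnx₂'] at h5
          linarith
        rw [Real.dist_eq, abs_lt]
        constructor
        · linarith
        · linarith
    · -- CASE A : L = 1 and strict inequality
      have hL1 : L = 1 := by
        by_contra h
        exact hcase (heq1 a₀ ha₀ (lt_of_le_of_ne hLIoc.2 h))
      have hstrict : 0 < S * Stmt12Aux.dn f a₀ 1 - Stmt12Aux.rr f a₀ 1 := by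
        rw [← hL1]
        have := lt_of_le_of_ne hLcond hcase
        linarith
      obtain ⟨δ, hδpos, hball⟩ := Metric.continuousAt_iff.1 (hca 1).continuousAt _ hstrict
      refine ⟨δ, hδpos, ?_⟩
      intro a haI hd
      have hba := hball hd
      rw [Real.dist_eq] at hba
      have hba' := abs_lt.1 hba
      have h1T : (1:ℝ) ∈ Stmt12Aux.Tset f S a := (Stmt12Aux.mem_Tset_iff hc haI hf_pos).2
        ⟨⟨haI.2, le_rfl⟩, by linarith⟩
      have hge := (hγ a haI).2 h1T
      have hle := (hγ a haI).1.1.2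
      have : sSup (Stmt12Aux.Tset f S a) = L := by rw [hL1]; linarith
      rw [this]
      simpa using hε
  · -- Monotonicity
    intro a₁ h₁ a₂ h₂ h12
    simp only
    by_cases hle : sSup (Stmt12Aux.Tset f S a₁) ≤ a₂
    · exact hle.trans ((hγ a₂ h₂).1.1.1).le
    · push_neg at hle
      refine (hγ a₂ h₂).2 ?_
      have hm1 := (hγ a₁ h₁).1
      refine ⟨⟨hle, hm1.1.2⟩, ?_⟩
      calc sSup (Stmt12Aux.Tset f S a₁) - S
          ≤ truncMean f a₁ (sSup (Stmt12Aux.Tset f S a₁)) := hm1.2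
        _ ≤ truncMean f a₂ _ :=
            Stmt12Aux.truncMean_mono hc hf_pos h₁.1 h12 hle hm1.1.2
end

section
/- Fix p_g with p₀ < p_g, and suppose in a candidate delayed stimulation equilibrium with θ̂_g > θ̂ and μ_m > 0 the conditions p_g + p₂ᵍ = p_m + p₂ᵐ, θ̂ = p_m + S, p₂ᵍ = θ̄_g, p_m = θ̄_m, μ_gθ̄_g + μ_mθ̄_m = E[θ | θ ≤ θ̂] hold, and additionally p₂ᵐ > p_g. Then θ̄_g > θ̄_m, hence θ̄_m < E[θ | θ ≤ θ̂], hence E[θ | θ ≤ θ̂] + S > θ̂, hence θ̂ < θ₀ and p_m < p₀. -/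
/-- core of Claim 5 in the proof of Theorem 3: in a candidate
delayed stimulation equilibrium with p₂ᵐ > p_g, the chain
θ̄_g > θ̄_m, θ̄_m < E[θ|θ≤θ̂], E[θ|θ≤θ̂] + S > θ̂, θ̂ < θ₀, p_m < p₀ follows. -/
theorem stmt_14 (f : ℝ → ℝ) (S pg pm p2g p2m p₀ θ₀ θhat θhatg μg μm θbarg θbarm : ℝ)
    (hS : 0 < S)
    (hanti : StrictAntiOn (fun t => condMean f t + S - t) (Set.Ioc 0 1))
    (hθ₀ : θ₀ ∈ Set.Ioo (0:ℝ) 1) (hθ₀eq : θ₀ = condMean f θ₀ + S)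
    (hp₀ : p₀ = condMean f θ₀) (hp₀' : p₀ = θ₀ - S)
    (hpg : p₀ < pg)
    (hθhat : θhat ∈ Set.Ioc (0:ℝ) 1) (hθhatg : θhat < θhatg)
    (hμg : 0 < μg) (hμm : 0 < μm) (hsum : μg + μm = 1)
    (hnoarb : pg + p2g = pm + p2m)
    (hindiff : θhat = pm + S)
    (hzg : p2g = θbarg) (hzm : pm = θbarm)
    (hfeas : μg * θbarg + μm * θbarm = condMean f θhat)
    (hdev : p2m > pg) :
    θbarg > θbarm ∧ θbarm < condMean f θhat ∧
      condMean f θhat + S > θhat ∧ θhat < θ₀ ∧ pm < p₀ := by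
  have h1 : θbarg > θbarm := by nlinarith
  have he : μm * θbarm = θbarm - μg * θbarm := by
    have hm : μm = 1 - μg := by linarith
    rw [hm]; ring
  have h2 : θbarm < condMean f θhat := by nlinarith [mul_pos hμg (sub_pos.mpr h1)]
  have h3 : condMean f θhat + S > θhat := by nlinarith
  have h4 : θhat < θ₀ := by
    by_contra h
    push_neg at h
    rcases eq_or_lt_of_le h with he | hl
    · rw [he] at hθ₀eq; linarith
    · have := hanti (Set.mem_of_mem_of_subset hθ₀ Set.Ioo_subset_Ioc_self) hθhat hl
      simp only at this
      have h0 : condMean f θ₀ + S - θ₀ = 0 := by linarith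
      linarith
  refine ⟨h1, h2, h3, h4, ?_⟩
  linarith
end

section
/- Let f be strictly log-concave on [0,1] and θ₀ the unique zero of t ↦ E[θ|θ≤t] + S - t with θ₀ ∈ (0,1). If 0 < θ̂ = θ̂_g = θ₂ (no firm sells in exactly one period), μ_g ∈ (0,1), and the equilibrium conditions p_m = p₂ᵐ, θ̂ = p_m + S, p_m ≥ p_g > p₀, p_g + p₂ᵍ = 2p_m with buyers' break-even E[θ | θ ≤ θ̂] = μ_g p₂ᵍ + (1-μ_g)p_m hold, then both θ̂ > θ₀ and θ̂ ≤ θ₀ follow, a contradiction; hence no equilibrium has θ̂ = θ̂_g = θ₂ > 0. -/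
/-- Step 2 of Lemma B.1: the degenerate configuration
θ̂ = θ̂_g = θ₂ > 0 cannot be an equilibrium: its conditions simultaneously imply
θ̂ > θ₀ and θ̂ ≤ θ₀, a contradiction. -/
theorem stmt_17 (f : ℝ → ℝ) (S pg pm p2g p2m p₀ θ₀ θhat μg : ℝ)
    (hS : 0 < S)
    (hanti : StrictAntiOn (fun t => condMean f t + S - t) (Set.Ioc 0 1))
    (hθ₀ : θ₀ ∈ Set.Ioo (0:ℝ) 1) (hθ₀eq : θ₀ = condMean f θ₀ + S)
    (hp₀ : p₀ = θ₀ - S) (hp₀' : p₀ = condMean f θ₀)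
    (hθhat : θhat ∈ Set.Ioc (0:ℝ) 1)
    (hμg : μg ∈ Set.Ioo (0:ℝ) 1)
    (hpm2 : pm = p2m)
    (hindiff : θhat = pm + S)
    (hpmpg : pm ≥ pg) (hpg : pg > p₀)
    (hnoarb : pg + p2g = 2 * pm)
    (hbe : condMean f θhat = μg * p2g + (1 - μg) * pm) :
    θ₀ < θhat ∧ θhat ≤ θ₀ := by
  have hθ₀' : θ₀ ∈ Set.Ioc (0:ℝ) 1 := ⟨hθ₀.1, le_of_lt hθ₀.2⟩
  constructor
  · -- θ₀ < θhat : pm ≥ pg > p₀ = θ₀ - S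
    have : pm > θ₀ - S := by linarith
    linarith
  · -- θhat ≤ θ₀
    have hp2g : p2g ≥ pm := by linarith
    have hcm : condMean f θhat ≥ pm := by
      nlinarith [hμg.1.le, hμg.2.le]
    by_contra h
    push_neg at h
    have := hanti hθ₀' hθhat h
    simp only at this
    linarith
end
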